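/- Let G be a connected linklessly embeddable (nIL) graph. Then no minimal vertex cut set of G consists of 5 vertices inducing a complete graph K_5 in G. -/

import Mathlib

open SimpleGraph

/-- `H` is a minor of `G`: there is a family of nonempty, pairwise disjoint,
connected branch sets in `G`, one for each vertex of `H`, with an edge of `G`
between the branch sets of any two adjacent vertices of `H`. -/
def IsMinor {W V : Type} (H : SimpleGraph W) (G : SimpleGraph V) : Prop :=
  ∃ f : W → Set V,
    (∀ w, (f w).Nonempty) ∧
    (∀ w, (G.induce (f w)).Connected) ∧
    (Pairwise fun w₁ w₂ => Disjoint (f w₁) (f w₂)) ∧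
    ∀ ⦃w₁ w₂⦄, H.Adj w₁ w₂ → ∃ v₁ ∈ f w₁, ∃ v₂ ∈ f w₂, G.Adj v₁ v₂

/-- The result of a `∇Y`-move on the triangle `a b c` of `G`: delete the edges of
the triangle and add a new vertex (`none`) joined to `a`, `b`, `c`. -/
def triangleY {V : Type} (G : SimpleGraph V) (a b c : V) : SimpleGraph (Option V) :=
  (SimpleGraph.map Function.Embedding.some
      (G.deleteEdges {s(a, b), s(b, c), s(a, c)})) ⊔
    SimpleGraph.fromEdgeSet {s((none : Option V), some a), s(none, some b), s(none, some c)}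

/-- Membership in the Petersen family: the graphs obtained from `K₆` by
`∇Y`-moves and `Y∇`-moves (the inverse operation), up to isomorphism. -/
inductive IsPetersenFamily : ∀ {V : Type}, SimpleGraph V → Prop
  | k6 : IsPetersenFamily (⊤ : SimpleGraph (Fin 6))
  | deltaY {V : Type} {G : SimpleGraph V} {a b c : V} :
      IsPetersenFamily G → G.Adj a b → G.Adj b c → G.Adj a c →
      IsPetersenFamily (triangleY G a b c)
  | yDelta {V : Type} {G : SimpleGraph V} {a b c : V} :
      IsPetersenFamily (triangleY G a b c) → G.Adj a b → G.Adj b c → G.Adj a c →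
      IsPetersenFamily G
  | iso {V W : Type} {G : SimpleGraph V} {H : SimpleGraph W} :
      IsPetersenFamily G → G ≃g H → IsPetersenFamily H

/-- A graph is linklessly embeddable (nIL) iff it has no minor in the Petersen family. -/
def IsLinkless {V : Type} (G : SimpleGraph V) : Prop :=
  ∀ ⦃W : Type⦄ (P : SimpleGraph W), IsPetersenFamily P → ¬ IsMinor P G

/-- The graph obtained from `G` by adding the edge `ab`. -/
def addEdge {V : Type} (G : SimpleGraph V) (a b : V) : SimpleGraph V :=
  G ⊔ SimpleGraph.fromEdgeSet {s(a, b)}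

/-- A nIL graph is maxnil if adding any edge yields a graph that is not nIL. -/
def IsMaxnil {V : Type} (G : SimpleGraph V) : Prop :=
  IsLinkless G ∧ ∀ a b : V, a ≠ b → ¬ G.Adj a b → ¬ IsLinkless (addEdge G a b)

/-- `S` is a vertex cut set of the connected graph `G` if `G - S` is disconnected. -/
def IsVertexCut {V : Type} (G : SimpleGraph V) (S : Set V) : Prop :=
  G.Connected ∧ ¬ (G.induce Sᶜ).Preconnected

/-- A vertex cut set is minimal if no proper subset of it is a vertex cut set. -/
def IsMinimalVertexCut {V : Type} (G : SimpleGraph V) (S : Set V) : Prop :=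
  IsVertexCut G S ∧ ∀ S' ⊂ S, ¬ IsVertexCut G S'

/-- A set `T` of vertices of `H` (inducing a `K₄`) is strongly separating if `H - T`
has at least two connected components such that every vertex of `T` has a
neighbor in each of them. -/
def StronglySeparating {V : Type} (H : SimpleGraph V) (T : Set V) : Prop :=
  ∃ C₁ C₂ : (H.induce Tᶜ).ConnectedComponent, C₁ ≠ C₂ ∧
    ∀ v ∈ T, (∃ u ∈ C₁.supp, H.Adj v ↑u) ∧ (∃ u ∈ C₂.supp, H.Adj v ↑u)

/-- `G` is maximal without a `K₆` minor. -/
def IsMaximalK6MinorFree {V : Type} (G : SimpleGraph V) : Prop :=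
  ¬ IsMinor (⊤ : SimpleGraph (Fin 6)) G ∧
    ∀ a b : V, a ≠ b → ¬ G.Adj a b → IsMinor (⊤ : SimpleGraph (Fin 6)) (addEdge G a b)

/-!
Let `C` be a component of `G - S`. By minimality of the cut `S`, every vertex `v ∈ S` has a
neighbour in `C`: otherwise `C` would still be a component of `G - (S \ {v})`, so `S \ {v}`
would already be a cut. Contracting `C` to a single vertex therefore joins it to all five
vertices of the clique `S`, which produces a `K₆` minor, and `K₆` lies in the Petersen family.
-/

namespace SimpleGraph

variable {V : Type} {G : SimpleGraph V}

lemma ConnectedComponent.connected_induce_image_val {s : Set V}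
    (C : (G.induce s).ConnectedComponent) : (G.induce (Subtype.val '' C.supp)).Connected :=
  C.connected_toSimpleGraph.map
    { toFun := fun u => ⟨u.1.1, u.1, u.2, rfl⟩
      map_rel' := id }
    (by rintro ⟨_, u, hu, rfl⟩; exact ⟨⟨u, hu⟩, rfl⟩)

lemma exists_notMem_supp_of_not_preconnected (h : ¬ G.Preconnected)
    (C : G.ConnectedComponent) : ∃ y, y ∉ C.supp := by
  obtain ⟨a, b, hab⟩ : ∃ a b, ¬ G.Reachable a b := by simpa [Preconnected] using h
  by_contra! hall
  exact hab (C.reachable_of_mem_supp (hall a) (hall b))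

lemma not_preconnected_induce_insert {s : Set V} {v : V} (C : (G.induce s).ConnectedComponent)
    (hC : ∀ u ∈ C.supp, ¬ G.Adj v u) {y : s} (hy : y ∉ C.supp) :
    ¬ (G.induce (insert v s)).Preconnected := by
  intro hpre
  obtain ⟨x, hx⟩ := C.nonempty_supp
  obtain ⟨p⟩ := hpre ⟨x, Set.mem_insert_of_mem v x.2⟩ ⟨y, Set.mem_insert_of_mem v y.2⟩
  let U : Set (insert v s : Set V) := {w | ∃ h : w.1 ∈ s, ⟨w.1, h⟩ ∈ C.supp}
  obtain ⟨⟨⟨a, b⟩, hab⟩, -, ⟨ha, haC⟩, hbU⟩ := p.exists_boundary_dart U ⟨x.2, hx⟩ (by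
    rintro ⟨_, hyC⟩; exact hy hyC)
  rcases b.2 with hbv | hbs
  · have hba : G.Adj b.1 a.1 := hab.symm
    rw [hbv] at hba
    exact hC _ haC hba
  · exact hbU ⟨hbs, C.mem_supp_of_adj_mem_supp haC hab⟩

end SimpleGraph

section

variable {V : Type} {G : SimpleGraph V}

lemma IsMinimalVertexCut.exists_adj_of_mem {S : Set V} (hS : IsMinimalVertexCut G S)
    (C : (G.induce Sᶜ).ConnectedComponent) {v : V} (hv : v ∈ S) :
    ∃ u ∈ C.supp, G.Adj v u := by
  by_contra! hC
  refine hS.2 (S \ {v}) (Set.sdiff_singleton_ssubset.2 hv) ⟨hS.1.1, ?_⟩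
  obtain ⟨y, hy⟩ := exists_notMem_supp_of_not_preconnected hS.1.2 C
  rw [Set.compl_sdiff, Set.singleton_union]
  exact not_preconnected_induce_insert C hC hy

lemma isMinor_top_of_clique_of_connected {n : ℕ} (f : Fin n → V)
    (hf : ∀ i j, i ≠ j → G.Adj (f i) (f j)) {T : Set V} (hT : (G.induce T).Connected)
    (hfT : ∀ i, f i ∉ T) (hadj : ∀ i, ∃ u ∈ T, G.Adj (f i) u) :
    IsMinor (⊤ : SimpleGraph (Fin (n + 1))) G := by
  have hf_ne : ∀ i j, i ≠ j → f i ≠ f j := fun i j hij => (hf i j hij).ne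
  refine ⟨Fin.snoc (fun i => {f i}) T, ?_, ?_, ?_, ?_⟩
  · intro w
    induction w using Fin.lastCases with
    | last => rw [Fin.snoc_last]; exact Set.nonempty_coe_sort.1 hT.nonempty
    | cast i => rw [Fin.snoc_castSucc]; exact Set.singleton_nonempty _
  · intro w
    induction w using Fin.lastCases with
    | last => rw [Fin.snoc_last]; exact hT
    | cast i => rw [Fin.snoc_castSucc, induce_singleton_eq_top]; exact connected_top
  · intro w₁ w₂ hne
    induction w₁ using Fin.lastCases <;> induction w₂ using Fin.lastCases
    · exact absurd rfl hne
    · simpa using hfT _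
    · simpa using hfT _
    · simpa using hf_ne _ _ (fun h => hne (congrArg _ h))
  · intro w₁ w₂ hne
    rw [top_adj] at hne
    induction w₁ using Fin.lastCases <;> induction w₂ using Fin.lastCases
    · exact absurd rfl hne
    · obtain ⟨u, hu, h⟩ := hadj ‹_›
      exact ⟨u, by simpa using hu, _, by simp, h.symm⟩
    · obtain ⟨u, hu, h⟩ := hadj ‹_›
      exact ⟨_, by simp, u, by simpa using hu, h⟩
    · exact ⟨_, by simp, _, by simp, hf _ _ (fun h => hne (congrArg _ h))⟩

end

theorem stmt_12_general {V : Type} (G : SimpleGraph V)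
    (hnil : IsLinkless G) :
    ¬ ∃ S : Set V, IsMinimalVertexCut G S ∧ S.ncard = 5 ∧
        ∀ a ∈ S, ∀ b ∈ S, a ≠ b → G.Adj a b := by
  rintro ⟨S, hS, hcard, hclique⟩
  obtain ⟨x, -⟩ : ∃ x y : ↥Sᶜ, ¬ (G.induce Sᶜ).Reachable x y := by
    simpa [Preconnected] using hS.1.2
  let C := (G.induce Sᶜ).connectedComponentMk x
  have : Finite S := (Set.finite_of_ncard_ne_zero (by omega)).to_subtype
  let e : Fin 5 ≃ S := (Finite.equivFinOfCardEq (by rwa [Nat.card_coe_set_eq])).symm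
  refine hnil _ .k6 (isMinor_top_of_clique_of_connected (fun i => (e i : V)) ?_
    C.connected_induce_image_val ?_ ?_)
  · exact fun i j hij => hclique _ (e i).2 _ (e j).2 (Subtype.coe_ne_coe.2 (e.injective.ne hij))
  · rintro i ⟨u, -, hu⟩
    exact u.2 (hu ▸ (e i).2)
  · intro i
    obtain ⟨u, hu, hadj⟩ := hS.exists_adj_of_mem C (e i).2
    exact ⟨u, ⟨u, hu, rfl⟩, hadj⟩

/-- In a connected linklessly embeddable graph, no minimal vertex cut set consists of
5 vertices inducing a complete graph `K₅`. -/
theorem stmt_12 {V : Type} [Fintype V] (G : SimpleGraph V)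
    (hconn : G.Connected) (hnil : IsLinkless G) :
    ¬ ∃ S : Set V, IsMinimalVertexCut G S ∧ S.ncard = 5 ∧
        ∀ a ∈ S, ∀ b ∈ S, a ≠ b → G.Adj a b :=
  stmt_12_general G hnil
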